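/- arXiv:1211.4854 — 3 statements merged into one kernel-verified Lean document; each statement's English description precedes it below -/
import Mathlib

section
/- Let 1 ≤ p ≤ 2 and let X be a Banach space of type p. Then every somewhat narrow bounded linear operator T : L_p → X is narrow. -/
/-
Somewhat narrowness, applied inside every set of positive measure, lets a greedy exhaustion
cover `A`, up to a set of small measure, by finitely many disjoint small pieces `Bᵢ` carrying
signs `xᵢ` with `‖T xᵢ‖ ≤ δ ‖xᵢ‖`. Averaging over all choices of signs `θ`, type `p` bounds
`‖∑ θᵢ T xᵢ‖ ^ p` by `K ^ p ∑ ‖T xᵢ‖ ^ p ≤ K ^ p δ ^ p ∑ μ Bᵢ`, while the means `cᵢ = ∫ xᵢ` satisfy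
`𝔼 (∑ θᵢ cᵢ) ^ 2 = ∑ cᵢ ^ 2 ≤ max μ Bᵢ`; so one `θ` makes both the image and the mean of the sign
`∑ θᵢ xᵢ` small. Adding the indicator of the small remainder gives a sign `x` on `A`, and switching
`x` from `1` to `-1` on a subset of measure `(∫ x) / 2` makes its mean zero at the cost of
`2 ‖T‖ ((∫ x) / 2) ^ (1 / p)`.
-/

open MeasureTheory Set Filter Topology
open scoped ENNReal NNReal

/-- Lebesgue measure on `[0,1]`. -/
noncomputable def μ01 : Measure ℝ := volume.restrict (Set.Icc 0 1)

/-- `x` is a sign on the measurable set `A`: a.e. it takes values `±1` on `A`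
and `0` outside of `A`. -/
def IsSignOn {p : ℝ≥0∞} (A : Set ℝ) (x : Lp ℝ p μ01) : Prop :=
  ∀ᵐ t ∂μ01, (t ∈ A → x t = 1 ∨ x t = -1) ∧ (t ∉ A → x t = 0)

/-- `T : L_p → X` is narrow: for every measurable `A ⊆ [0,1]` and every `ε > 0`
there is a mean zero sign `x` on `A` with `‖T x‖ < ε`. -/
def IsNarrow {X : Type*} [NormedAddCommGroup X] [NormedSpace ℝ X] {p : ℝ≥0∞} [Fact (1 ≤ p)]
    (T : Lp ℝ p μ01 →L[ℝ] X) : Prop :=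
  ∀ A : Set ℝ, A ⊆ Set.Icc 0 1 → MeasurableSet A → ∀ ε : ℝ, 0 < ε →
    ∃ x : Lp ℝ p μ01, IsSignOn A x ∧ (∫ t, x t ∂μ01) = 0 ∧ ‖T x‖ < ε

/-- `T : L_p → X` is somewhat narrow: for every measurable `A ⊆ [0,1]` of positive
measure and every `ε > 0` there are a measurable `B ⊆ A` of positive measure and a
sign `x` on `B` with `‖T x‖ < ε ‖x‖`. -/
def IsSomewhatNarrow {X : Type*} [NormedAddCommGroup X] [NormedSpace ℝ X] {p : ℝ≥0∞}
    [Fact (1 ≤ p)] (T : Lp ℝ p μ01 →L[ℝ] X) : Prop :=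
  ∀ A : Set ℝ, A ⊆ Set.Icc 0 1 → MeasurableSet A → 0 < μ01 A → ∀ ε : ℝ, 0 < ε →
    ∃ B : Set ℝ, B ⊆ A ∧ MeasurableSet B ∧ 0 < μ01 B ∧
      ∃ x : Lp ℝ p μ01, IsSignOn B x ∧ ‖T x‖ < ε * ‖x‖

/-- `X` has type `p`: the average over all choices of signs `θ ∈ {-1,1}ⁿ` of
`‖∑ θ_i x_i‖ ^ p` is at most `K ^ p * ∑ ‖x_i‖ ^ p`. -/
def HasTypeP (p : ℝ) (X : Type*) [NormedAddCommGroup X] : Prop :=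
  ∃ K : ℝ, 0 < K ∧ ∀ (n : ℕ) (x : Fin n → X),
    (∑ θ : Fin n → Bool, ‖∑ i, if θ i then x i else -x i‖ ^ p) / 2 ^ n
      ≤ K ^ p * ∑ i, ‖x i‖ ^ p

open Function

instance : IsProbabilityMeasure μ01 := ⟨by simp [μ01]⟩

lemma measureReal_inter_Iic_le_add (S : Set ℝ) (a b : ℝ) :
    μ01.real (S ∩ Iic a) ≤ μ01.real (S ∩ Iic b) + dist a b := by
  have hsub : S ∩ Iic a ⊆ (S ∩ Iic b) ∪ Ioc b a := fun t ⟨hS, ha⟩ ↦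
    (le_or_gt t b).imp (fun hb ↦ ⟨hS, hb⟩) (fun hb ↦ ⟨hb, ha⟩)
  have hIoc : μ01.real (Ioc b a) ≤ dist a b := calc
    μ01.real (Ioc b a) ≤ volume.real (Ioc b a) :=
      ENNReal.toReal_mono (by simp) (Measure.restrict_le_self _)
    _ = max (a - b) 0 := Real.volume_real_Ioc
    _ ≤ dist a b := max_le (le_abs_self _) dist_nonneg
  calc μ01.real (S ∩ Iic a) ≤ μ01.real ((S ∩ Iic b) ∪ Ioc b a) := measureReal_mono hsub
    _ ≤ _ := (measureReal_union_le _ _).trans (by gcongr)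

lemma exists_subset_measureReal_eq {S : Set ℝ} (hS : MeasurableSet S) {r : ℝ} (hr0 : 0 ≤ r)
    (hr : r ≤ μ01.real S) : ∃ D ⊆ S, MeasurableSet D ∧ μ01.real D = r := by
  set g : ℝ → ℝ := fun t ↦ μ01.real (S ∩ Iic t)
  have hg : Continuous g := (LipschitzWith.of_le_add (measureReal_inter_Iic_le_add S)).continuous
  have hg0 : g 0 = 0 := by
    have h0 : μ01 (Iic 0) = 0 := by
      rw [μ01, Measure.restrict_apply measurableSet_Iic]
      exact measure_mono_null (fun t ht ↦ le_antisymm ht.1 ht.2.1 : Iic (0 : ℝ) ∩ Icc 0 1 ⊆ {0})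
        (measure_singleton 0)
    simp [g, measureReal_def, measure_mono_null inter_subset_right h0]
  have hg1 : g 1 = μ01.real S := by
    have : Iic (1 : ℝ) ∩ Icc 0 1 = Icc 0 1 := inter_eq_right.2 fun t ht ↦ ht.2
    simp [g, μ01, measureReal_restrict_apply (hS.inter measurableSet_Iic),
      measureReal_restrict_apply hS, inter_assoc, this]
  obtain ⟨t, -, ht⟩ := intermediate_value_Icc zero_le_one hg.continuousOn
    (show r ∈ Icc (g 0) (g 1) by rw [hg0, hg1]; exact ⟨hr0, hr⟩)
  exact ⟨S ∩ Iic t, inter_subset_left, hS.inter measurableSet_Iic, ht⟩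

section Greedy

variable {α : Type*} (A : Set α) (pick : Set α → Set α)

def greedyRemainder : ℕ → Set α
  | 0 => A
  | k + 1 => greedyRemainder k \ pick (greedyRemainder k)

lemma antitone_greedyRemainder : Antitone (greedyRemainder A pick) :=
  antitone_nat_of_succ_le fun _ ↦ sdiff_subset

lemma greedyRemainder_eq (n : ℕ) :
    greedyRemainder A pick n = A \ ⋃ i : Fin n, pick (greedyRemainder A pick i) := by
  induction n with
  | zero => simp [greedyRemainder]
  | succ n ih =>
    ext t
    simp only [greedyRemainder, ih, Set.mem_sdiff, mem_iUnion, not_exists, Fin.exists_fin_succ',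
      Fin.val_castSucc, Fin.val_last, not_or]
    tauto

lemma pairwise_disjoint_pick_greedyRemainder (hpick : ∀ S, pick S ⊆ S) :
    Pairwise (Disjoint on fun k ↦ pick (greedyRemainder A pick k)) :=
  (pairwise_disjoint_on _).2 fun _ _ hij ↦ disjoint_sdiff_self_right.mono_right
    ((hpick _).trans (antitone_greedyRemainder A pick hij))

lemma measurableSet_greedyRemainder [MeasurableSpace α] (hA : MeasurableSet A)
    (hpick : ∀ S, MeasurableSet (pick S)) (k : ℕ) : MeasurableSet (greedyRemainder A pick k) := by
  induction k with
  | zero => exact hA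
  | succ k ih => exact ih.diff (hpick _)

end Greedy

section Exhaustion

variable {α : Type*} [MeasurableSpace α] {μ : Measure α} [IsFiniteMeasure μ] {Good : Set α → Prop}

lemma exists_iSup_measure_le_two_mul (hGood : Good ∅) (S : Set α) :
    ∃ B, (B ⊆ S ∧ MeasurableSet B ∧ Good B) ∧
      ⨆ (B' : Set α) (_ : B' ⊆ S ∧ MeasurableSet B' ∧ Good B'), μ B' ≤ 2 * μ B := by
  set m := ⨆ (B' : Set α) (_ : B' ⊆ S ∧ MeasurableSet B' ∧ Good B'), μ B'
  rcases eq_or_ne m 0 with h0 | h0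
  · exact ⟨∅, ⟨empty_subset _, .empty, hGood⟩, by simp [h0]⟩
  have hfin : m ≠ ∞ := ne_top_of_le_ne_top (measure_ne_top μ univ)
    (iSup₂_le fun B _ ↦ measure_mono (subset_univ B))
  obtain ⟨B, hlt⟩ := lt_iSup_iff.1 (ENNReal.half_lt_self h0 hfin)
  obtain ⟨hB, hlt⟩ := lt_iSup_iff.1 hlt
  rw [ENNReal.div_lt_iff (by simp) (by simp)] at hlt
  exact ⟨B, hB, mul_comm (μ B) 2 ▸ hlt.le⟩

/- Each greedy step removes a good piece of at least half the supremum available in the remainder.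
The pieces are disjoint, so their measures tend to zero, and hence the intersection of the
remainders contains no good set of positive measure. -/
theorem exists_disjoint_family_measure_diff_lt (hGood : Good ∅) {A : Set α}
    (hA : MeasurableSet A)
    (h : ∀ S ⊆ A, MeasurableSet S → 0 < μ S → ∃ B ⊆ S, MeasurableSet B ∧ 0 < μ B ∧ Good B)
    {η : ℝ≥0∞} (hη : 0 < η) :
    ∃ (n : ℕ) (B : Fin n → Set α), (∀ i, B i ⊆ A ∧ MeasurableSet (B i) ∧ Good (B i)) ∧
      Pairwise (Disjoint on B) ∧ μ (A \ ⋃ i, B i) < η := by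
  let m : Set α → ℝ≥0∞ := fun S ↦ ⨆ (B : Set α) (_ : B ⊆ S ∧ MeasurableSet B ∧ Good B), μ B
  have hm_mono : Monotone m := fun S S' hS ↦
    iSup₂_mono' fun B hB ↦ ⟨B, ⟨hB.1.trans hS, hB.2⟩, le_rfl⟩
  choose pick hpick_good hpick_ge using exists_iSup_measure_le_two_mul (μ := μ) hGood
  set rem := greedyRemainder A pick
  have hanti : Antitone rem := antitone_greedyRemainder A pick
  have hremm := measurableSet_greedyRemainder A pick hA fun S ↦ (hpick_good S).2.1
  have hdisj := pairwise_disjoint_pick_greedyRemainder A pick fun S ↦ (hpick_good S).1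
  have hC0 : Tendsto (fun k ↦ 2 * μ (pick (rem k))) atTop (𝓝 0) := by
    have := ENNReal.tendsto_atTop_zero_of_tsum_ne_top (by
      rw [← measure_iUnion hdisj fun k ↦ (hpick_good _).2.1]; exact measure_ne_top μ _)
    simpa using ENNReal.Tendsto.const_mul this (Or.inr ENNReal.ofNat_ne_top) (a := 2)
  have hm0 : m (⋂ k, rem k) = 0 := le_antisymm
    (ge_of_tendsto' hC0 fun k ↦ (hm_mono (iInter_subset _ k)).trans (hpick_ge _)) zero_le
  have hnull : μ (⋂ k, rem k) = 0 := by
    by_contra hpos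
    obtain ⟨B, hB, hBm, hBpos, hBgood⟩ :=
      h _ (iInter_subset _ 0) (.iInter hremm) (pos_iff_ne_zero.2 hpos)
    have : μ B ≤ m (⋂ k, rem k) := le_iSup₂_of_le B ⟨hB, hBm, hBgood⟩ le_rfl
    exact hBpos.ne' (le_antisymm (this.trans hm0.le) zero_le)
  have htend : Tendsto (fun k ↦ μ (rem k)) atTop (𝓝 0) :=
    hnull ▸ tendsto_measure_iInter_atTop (fun k ↦ (hremm k).nullMeasurableSet) hanti
      ⟨0, measure_ne_top _ _⟩
  obtain ⟨n, hn⟩ := (htend.eventually (gt_mem_nhds hη)).exists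
  refine ⟨n, fun i ↦ pick (rem i), fun i ↦ ⟨(hpick_good _).1.trans (hanti (Nat.zero_le _)),
    (hpick_good _).2⟩, fun i j hij ↦ hdisj (Fin.val_injective.ne hij), ?_⟩
  rwa [← greedyRemainder_eq]

end Exhaustion

theorem sum_sq_signed_sum_eq (n : ℕ) (c : Fin n → ℝ) :
    ∑ θ : Fin n → Bool, (∑ i, if θ i then c i else -c i) ^ 2 = 2 ^ n * ∑ i, c i ^ 2 := by
  induction n with
  | zero => simp
  | succ n ih =>
    rw [← (Fin.consEquiv fun _ ↦ Bool).sum_comp, Fintype.sum_prod_type, Fintype.sum_bool]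
    simp only [Fin.consEquiv_apply, Fin.sum_univ_succ, Fin.cons_zero, Fin.cons_succ, if_true,
      Bool.false_eq_true, if_false, ← Finset.sum_add_distrib]
    have hpar : ∀ s : ℝ, (c 0 + s) ^ 2 + (-c 0 + s) ^ 2 = 2 * c 0 ^ 2 + 2 * s ^ 2 := fun s ↦ by
      ring
    simp only [hpar, Finset.sum_add_distrib, ← Finset.mul_sum, ih, Finset.sum_const,
      Finset.card_univ, Fintype.card_fun, Fintype.card_bool, Fintype.card_fin, nsmul_eq_mul]
    push_cast
    ring

def IsTypeConstant (p : ℝ) (X : Type*) [NormedAddCommGroup X] (K : ℝ) : Prop :=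
  ∀ (n : ℕ) (x : Fin n → X),
    (∑ θ : Fin n → Bool, ‖∑ i, if θ i then x i else -x i‖ ^ p) / 2 ^ n ≤ K ^ p * ∑ i, ‖x i‖ ^ p

theorem IsTypeConstant.exists_signs_le {X : Type*} [NormedAddCommGroup X] {p K : ℝ}
    (hK : IsTypeConstant p X K) {n : ℕ} (y : Fin n → X) (c : Fin n → ℝ) :
    ∃ θ : Fin n → Bool, ‖∑ i, if θ i then y i else -y i‖ ^ p + (∑ i, if θ i then c i else -c i) ^ 2
      ≤ K ^ p * ∑ i, ‖y i‖ ^ p + ∑ i, c i ^ 2 := by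
  have hy := hK n y
  rw [div_le_iff₀ (by positivity)] at hy
  have hsum : ∑ θ : Fin n → Bool, (‖∑ i, if θ i then y i else -y i‖ ^ p
      + (∑ i, if θ i then c i else -c i) ^ 2)
      ≤ ∑ _θ : Fin n → Bool, (K ^ p * ∑ i, ‖y i‖ ^ p + ∑ i, c i ^ 2) := by
    rw [Finset.sum_add_distrib, sum_sq_signed_sum_eq, Finset.sum_const, Finset.card_univ,
      Fintype.card_fun, Fintype.card_bool, Fintype.card_fin, nsmul_eq_mul]
    push_cast
    linarith
  obtain ⟨θ, -, hθ⟩ := Finset.exists_le_of_sum_le Finset.univ_nonempty hsum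
  exact ⟨θ, hθ⟩

section Signs

variable {p : ℝ≥0∞}

lemma isSignOn_zero : IsSignOn ∅ (0 : Lp ℝ p μ01) :=
  .of_forall fun t ↦ by simp

lemma isSignOn_indicatorConstLp {A : Set ℝ} (hA : MeasurableSet A) (hμA : μ01 A ≠ ∞) :
    IsSignOn A (indicatorConstLp p hA hμA (1 : ℝ)) := by
  filter_upwards [indicatorConstLp_coeFn (p := p) (hs := hA) (hμs := hμA) (c := (1 : ℝ))]
    with t ht
  by_cases htA : t ∈ A <;> simp [ht, htA]

lemma IsSignOn.neg {A : Set ℝ} {x : Lp ℝ p μ01} (hx : IsSignOn A x) : IsSignOn A (-x) := by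
  filter_upwards [hx, Lp.coeFn_neg x] with t ht hneg
  rw [hneg, Pi.neg_apply]
  refine ⟨fun htA ↦ ?_, fun htA ↦ by simp [ht.2 htA]⟩
  rcases ht.1 htA with h | h <;> simp [h]

lemma IsSignOn.add {A B : Set ℝ} {x y : Lp ℝ p μ01} (hx : IsSignOn A x) (hy : IsSignOn B y)
    (hAB : Disjoint A B) : IsSignOn (A ∪ B) (x + y) := by
  filter_upwards [hx, hy, Lp.coeFn_add x y] with t htx hty hadd
  rw [hadd, Pi.add_apply]
  by_cases htA : t ∈ A
  · have htB : t ∉ B := hAB.notMem_of_mem_left htA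
    simpa [htA, hty.2 htB] using htx.1 htA
  · by_cases htB : t ∈ B
    · simpa [htB, htx.2 htA] using hty.1 htB
    · simp [htA, htB, htx.2 htA, hty.2 htB]

lemma IsSignOn.sum {ι : Type*} [Fintype ι] {B : ι → Set ℝ} {x : ι → Lp ℝ p μ01}
    (hx : ∀ i, IsSignOn (B i) (x i)) (hB : Pairwise (Disjoint on B)) :
    IsSignOn (⋃ i, B i) (∑ i, x i) := by
  classical
  suffices ∀ s : Finset ι, IsSignOn (⋃ i ∈ s, B i) (∑ i ∈ s, x i) by simpa using this Finset.univ
  intro s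
  induction s using Finset.induction_on with
  | empty => simpa using isSignOn_zero
  | insert i s hi ih =>
    rw [Finset.sum_insert hi, Finset.set_biUnion_insert]
    exact (hx i).add ih (disjoint_iUnion₂_right.2 fun j hj ↦ hB (ne_of_mem_of_not_mem hj hi).symm)

lemma IsSignOn.abs_ae_eq {A : Set ℝ} {x : Lp ℝ p μ01} (hx : IsSignOn A x) :
    (fun t ↦ |x t|) =ᵐ[μ01] A.indicator 1 := by
  filter_upwards [hx] with t ht
  by_cases htA : t ∈ A
  · rcases ht.1 htA with h | h <;> simp [h, htA]
  · simp [ht.2 htA, htA]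

variable [Fact (1 ≤ p)]

lemma toReal_pos_of_fact (hp : p ≠ ∞) : 0 < p.toReal :=
  ENNReal.toReal_pos (one_pos.trans_le Fact.out).ne' hp

lemma integrable_Lp (x : Lp ℝ p μ01) : Integrable x μ01 := (Lp.memLp x).integrable Fact.out

noncomputable def integralLM : Lp ℝ p μ01 →ₗ[ℝ] ℝ where
  toFun x := ∫ t, x t ∂μ01
  map_add' x y := by
    rw [integral_congr_ae (Lp.coeFn_add x y)]
    exact integral_add (integrable_Lp x) (integrable_Lp y)
  map_smul' c x := by
    rw [integral_congr_ae (Lp.coeFn_smul c x)]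
    exact integral_smul c _

lemma integralLM_apply (x : Lp ℝ p μ01) : integralLM x = ∫ t, x t ∂μ01 := rfl

lemma IsSignOn.norm_eq (hp : p ≠ ∞) {A : Set ℝ} (hA : MeasurableSet A) {x : Lp ℝ p μ01}
    (hx : IsSignOn A x) : ‖x‖ = μ01.real A ^ (1 / p.toReal) := by
  have hnorm : ‖x‖ = ‖indicatorConstLp p hA (measure_ne_top μ01 A) (1 : ℝ)‖ := by
    rw [Lp.norm_def, Lp.norm_def]
    congr 1
    refine eLpNorm_congr_norm_ae ?_
    filter_upwards [hx.abs_ae_eq, indicatorConstLp_coeFn (p := p) (hs := hA) (c := (1 : ℝ))]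
      with t ht hind
    rw [hind, Real.norm_eq_abs, ht, Real.norm_eq_abs, abs_of_nonneg (indicator_nonneg (by simp) t)]
    rfl
  rw [hnorm, norm_indicatorConstLp (one_pos.trans_le Fact.out).ne' hp, norm_one, one_mul]

lemma IsSignOn.norm_rpow_eq (hp : p ≠ ∞) {A : Set ℝ} (hA : MeasurableSet A) {x : Lp ℝ p μ01}
    (hx : IsSignOn A x) : ‖x‖ ^ p.toReal = μ01.real A := by
  rw [hx.norm_eq hp hA, one_div, Real.rpow_inv_rpow measureReal_nonneg (toReal_pos_of_fact hp).ne']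

lemma IsSignOn.abs_integral_le {A : Set ℝ} (hA : MeasurableSet A) {x : Lp ℝ p μ01}
    (hx : IsSignOn A x) : |∫ t, x t ∂μ01| ≤ μ01.real A := by
  rw [← integral_indicator_one hA]
  exact abs_integral_le_integral_abs.trans (integral_mono_ae (integrable_Lp x).abs
    ((integrable_const 1).indicator hA) hx.abs_ae_eq.le)

lemma IsSignOn.integral_sq_le {A : Set ℝ} (hA : MeasurableSet A) {x : Lp ℝ p μ01}
    (hx : IsSignOn A x) {t : ℝ} (hAt : μ01.real A ≤ t) :
    (∫ s, x s ∂μ01) ^ 2 ≤ t * μ01.real A := by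
  have habs := hx.abs_integral_le hA
  rw [← sq_abs, sq]
  exact mul_le_mul (habs.trans hAt) habs (abs_nonneg _) (measureReal_nonneg.trans hAt)

lemma IsSignOn.integral_le_measureReal {A : Set ℝ} {x : Lp ℝ p μ01} (hx : IsSignOn A x)
    (hx1 : MeasurableSet (A ∩ x ⁻¹' {1})) :
    ∫ t, x t ∂μ01 ≤ μ01.real (A ∩ x ⁻¹' {1}) := by
  rw [← integral_indicator_one hx1]
  refine integral_mono_ae (integrable_Lp x) ((integrable_const 1).indicator hx1) ?_
  filter_upwards [hx] with t ht
  by_cases htA : t ∈ A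
  · rcases ht.1 htA with h | h
    · simp [h, htA]
    · rw [h]
      exact (by norm_num : (-1 : ℝ) ≤ 0).trans (indicator_nonneg (by simp) t)
  · simp [ht.2 htA, htA]

lemma IsSignOn.exists_integral_eq_zero_of_nonneg (hp : p ≠ ∞) {A : Set ℝ} (hA : MeasurableSet A)
    {x : Lp ℝ p μ01} (hx : IsSignOn A x) (hc : 0 ≤ ∫ t, x t ∂μ01) :
    ∃ x' : Lp ℝ p μ01, IsSignOn A x' ∧ ∫ t, x' t ∂μ01 = 0 ∧
      ‖x - x'‖ ≤ 2 * ((∫ t, x t ∂μ01) / 2) ^ (1 / p.toReal) := by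
  set c := ∫ t, x t ∂μ01
  have hPm : MeasurableSet (A ∩ x ⁻¹' {1}) :=
    hA.inter ((Lp.stronglyMeasurable x).measurable (measurableSet_singleton 1))
  obtain ⟨D, hDP, hDm, hμD⟩ := exists_subset_measureReal_eq hPm (r := c / 2) (by positivity)
    (by linarith [hx.integral_le_measureReal hPm])
  set e := indicatorConstLp p hDm (measure_ne_top μ01 D) (2 : ℝ)
  refine ⟨x - e, ?_, ?_, ?_⟩
  · filter_upwards [hx, Lp.coeFn_sub x e,
      indicatorConstLp_coeFn (p := p) (hs := hDm) (c := (2 : ℝ))] with t ht hsub he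
    rw [hsub, Pi.sub_apply, he]
    by_cases htD : t ∈ D
    · obtain ⟨htA, ht1 : x t = 1⟩ := hDP htD
      norm_num [htD, htA, ht1]
    · simpa [htD] using ht
  · rw [← integralLM_apply, map_sub, integralLM_apply, integralLM_apply, integral_indicatorConstLp,
      hμD]
    ring
  · rw [sub_sub_cancel, norm_indicatorConstLp (one_pos.trans_le Fact.out).ne' hp, hμD]
    simp

lemma IsSignOn.exists_integral_eq_zero (hp : p ≠ ∞) {A : Set ℝ} (hA : MeasurableSet A)
    {x : Lp ℝ p μ01} (hx : IsSignOn A x) :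
    ∃ x' : Lp ℝ p μ01, IsSignOn A x' ∧ ∫ t, x' t ∂μ01 = 0 ∧
      ‖x - x'‖ ≤ 2 * (|∫ t, x t ∂μ01| / 2) ^ (1 / p.toReal) := by
  rcases le_total 0 (∫ t, x t ∂μ01) with hc | hc
  · rw [abs_of_nonneg hc]
    exact hx.exists_integral_eq_zero_of_nonneg hp hA hc
  have hneg : ∫ t, (-x) t ∂μ01 = -∫ t, x t ∂μ01 := by
    rw [← integralLM_apply, map_neg, integralLM_apply]
  obtain ⟨x', hx', hint, hnorm⟩ :=
    hx.neg.exists_integral_eq_zero_of_nonneg hp hA (hneg ▸ neg_nonneg.2 hc)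
  refine ⟨-x', hx'.neg, ?_, ?_⟩
  · rw [← integralLM_apply, map_neg, integralLM_apply, hint, neg_zero]
  · rwa [abs_of_nonpos hc, ← hneg, ← norm_neg, neg_sub', neg_neg]

end Signs

lemma exists_pos_lt_of_continuous {f : ℝ → ℝ} (hf : Continuous f) (h0 : f 0 = 0) {ε : ℝ}
    (hε : 0 < ε) : ∃ t > 0, f t < ε := by
  have hf0 : ∀ᶠ t in 𝓝[>] 0, f t < ε :=
    ((hf.tendsto' 0 0 h0).eventually (gt_mem_nhds hε)).filter_mono nhdsWithin_le_nhds
  obtain ⟨t, htε, ht⟩ := (hf0.and self_mem_nhdsWithin).exists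
  exact ⟨t, ht, htε⟩

section Operator

variable {X : Type*} [NormedAddCommGroup X] [NormedSpace ℝ X] {p : ℝ≥0∞} [Fact (1 ≤ p)]

lemma IsSignOn.exists_superset (hp : p ≠ ∞) (T : Lp ℝ p μ01 →L[ℝ] X) {U A : Set ℝ}
    (hUA : U ⊆ A) (hUm : MeasurableSet U) (hAm : MeasurableSet A) {y : Lp ℝ p μ01}
    (hy : IsSignOn U y) : ∃ z : Lp ℝ p μ01, IsSignOn A z ∧
      ‖T z‖ + |∫ t, z t ∂μ01| ≤ ‖T y‖ + |∫ t, y t ∂μ01|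
        + (‖T‖ * μ01.real (A \ U) ^ (1 / p.toReal) + μ01.real (A \ U)) := by
  have hRm : MeasurableSet (A \ U) := hAm.diff hUm
  set r := indicatorConstLp p hRm (measure_ne_top μ01 _) (1 : ℝ)
  have hr : IsSignOn (A \ U) r := isSignOn_indicatorConstLp hRm _
  refine ⟨y + r, by simpa [union_sdiff_cancel hUA] using hy.add hr disjoint_sdiff_right, ?_⟩
  have hTr : ‖T r‖ ≤ ‖T‖ * μ01.real (A \ U) ^ (1 / p.toReal) :=
    hr.norm_eq hp hRm ▸ T.le_opNorm r
  have hir := hr.abs_integral_le hRm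
  have hadd : ‖T (y + r)‖ + |∫ t, (y + r) t ∂μ01|
      ≤ ‖T y‖ + ‖T r‖ + (|∫ t, y t ∂μ01| + |∫ t, r t ∂μ01|) := by
    rw [map_add, ← integralLM_apply, map_add]
    exact add_le_add (norm_add_le _ _) (abs_add_le _ _)
  linarith

lemma IsSignOn.norm_apply_rpow_le (hp : p ≠ ∞) (T : Lp ℝ p μ01 →L[ℝ] X) {A : Set ℝ}
    (hA : MeasurableSet A) {x : Lp ℝ p μ01} (hx : IsSignOn A x) {t : ℝ} (ht : 0 ≤ t)
    (hTx : ‖T x‖ ≤ t * ‖x‖) : ‖T x‖ ^ p.toReal ≤ t ^ p.toReal * μ01.real A := by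
  rw [← hx.norm_rpow_eq hp hA, ← Real.mul_rpow ht (norm_nonneg _)]
  exact Real.rpow_le_rpow (norm_nonneg _) hTx (toReal_pos_of_fact hp).le

lemma IsSomewhatNarrow.exists_sign_subset {T : Lp ℝ p μ01 →L[ℝ] X} (hT : IsSomewhatNarrow T)
    {S : Set ℝ} (hS1 : S ⊆ Icc 0 1) (hSm : MeasurableSet S) (hS : 0 < μ01 S) {t : ℝ}
    (ht : 0 < t) : ∃ B ⊆ S, MeasurableSet B ∧ 0 < μ01 B ∧
      μ01.real B ≤ t ∧ ∃ x : Lp ℝ p μ01, IsSignOn B x ∧ ‖T x‖ ≤ t * ‖x‖ := by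
  have hSr : 0 < μ01.real S := ENNReal.toReal_pos hS.ne' (measure_ne_top _ _)
  obtain ⟨D, hDS, hDm, hμD⟩ :=
    exists_subset_measureReal_eq hSm (r := min t (μ01.real S)) (by positivity) (min_le_right _ _)
  have hD : 0 < μ01 D := by
    refine pos_of_ne_zero fun h ↦ ?_
    simp only [measureReal_def, h, ENNReal.toReal_zero] at hμD
    exact (lt_min ht hSr).ne hμD
  obtain ⟨B, hBD, hBm, hB, x, hx, hTx⟩ := hT D (hDS.trans hS1) hDm hD t ht
  exact ⟨B, hBD.trans hDS, hBm, hB, (measureReal_mono hBD).trans (hμD.trans_le (min_le_left _ _)),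
    x, hx, hTx.le⟩

lemma exists_sign_iUnion_norm_rpow_add_sq_le (hp : p ≠ ∞) {K : ℝ} (hK0 : 0 < K)
    (hK : IsTypeConstant p.toReal X K) (T : Lp ℝ p μ01 →L[ℝ] X) {t : ℝ} (ht : 0 ≤ t) {n : ℕ}
    {B : Fin n → Set ℝ} (hBm : ∀ i, MeasurableSet (B i)) (hB : Pairwise (Disjoint on B))
    (hμB : ∀ i, μ01.real (B i) ≤ t) {x : Fin n → Lp ℝ p μ01} (hx : ∀ i, IsSignOn (B i) (x i))
    (hTx : ∀ i, ‖T (x i)‖ ≤ t * ‖x i‖) :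
    ∃ y : Lp ℝ p μ01, IsSignOn (⋃ i, B i) y ∧
      ‖T y‖ ^ p.toReal + (∫ s, y s ∂μ01) ^ 2 ≤ K ^ p.toReal * t ^ p.toReal + t := by
  set q := p.toReal
  have hsumB : ∑ i, μ01.real (B i) ≤ 1 := by
    rw [← measureReal_iUnion_fintype hB hBm]
    exact measureReal_le_one
  have hTxq : ∑ i, ‖T (x i)‖ ^ q ≤ t ^ q := calc
    ∑ i, ‖T (x i)‖ ^ q ≤ ∑ i, t ^ q * μ01.real (B i) :=
      Finset.sum_le_sum fun i _ ↦ (hx i).norm_apply_rpow_le hp T (hBm i) ht (hTx i)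
    _ ≤ t ^ q := by
      rw [← Finset.mul_sum]
      exact mul_le_of_le_one_right (by positivity) hsumB
  have hint : ∑ i, (∫ s, x i s ∂μ01) ^ 2 ≤ t := calc
    ∑ i, (∫ s, x i s ∂μ01) ^ 2 ≤ ∑ i, t * μ01.real (B i) :=
      Finset.sum_le_sum fun i _ ↦ (hx i).integral_sq_le (hBm i) (hμB i)
    _ ≤ t := by
      rw [← Finset.mul_sum]
      exact mul_le_of_le_one_right ht hsumB
  obtain ⟨θ, hθ⟩ := hK.exists_signs_le (fun i ↦ T (x i)) (fun i ↦ ∫ s, x i s ∂μ01)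
  refine ⟨∑ i, if θ i then x i else -x i, IsSignOn.sum (fun i ↦ ?_) hB, ?_⟩
  · split_ifs
    exacts [hx i, (hx i).neg]
  · have hTy : T (∑ i, if θ i then x i else -x i) = ∑ i, if θ i then T (x i) else -T (x i) := by
      simp only [map_sum, apply_ite T, map_neg]
    have hiy : ∫ s, (∑ i, if θ i then x i else -x i) s ∂μ01
        = ∑ i, if θ i then ∫ s, x i s ∂μ01 else -∫ s, x i s ∂μ01 := by
      simp only [← integralLM_apply, map_sum, apply_ite integralLM, map_neg]
    rw [hTy, hiy]
    refine hθ.trans (add_le_add ?_ hint)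
    exact mul_le_mul_of_nonneg_left hTxq (by positivity)

def IsNarrowUpToMean (T : Lp ℝ p μ01 →L[ℝ] X) : Prop :=
  ∀ A : Set ℝ, A ⊆ Icc 0 1 → MeasurableSet A → ∀ ε : ℝ, 0 < ε →
    ∃ x : Lp ℝ p μ01, IsSignOn A x ∧ ‖T x‖ + |∫ t, x t ∂μ01| < ε

theorem IsSomewhatNarrow.isNarrowUpToMean (hp : p ≠ ∞) {T : Lp ℝ p μ01 →L[ℝ] X}
    (hT : IsSomewhatNarrow T) (hX : HasTypeP p.toReal X) : IsNarrowUpToMean T := by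
  intro A hA1 hAm ε hε
  obtain ⟨K, hK0, hK⟩ := hX
  set q := p.toReal
  have hq : 0 < q := toReal_pos_of_fact hp
  set s : ℝ → ℝ := fun t ↦ K ^ q * t ^ q + t
  -- `t` is both the ratio `‖T xᵢ‖ / ‖xᵢ‖` and the bound on `μ Bᵢ` and on the remainder; `f t`
  -- is the resulting bound on `‖T z‖ + |∫ z|`.
  obtain ⟨t, ht, htε⟩ := exists_pos_lt_of_continuous
    (f := fun t ↦ s t ^ (1 / q) + √(s t) + (‖T‖ * t ^ (1 / q) + t))
    (by fun_prop (disch := positivity)) (by simp [s, hq.ne']) hε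
  obtain ⟨n, B, hB, hdisj, hR⟩ := exists_disjoint_family_measure_diff_lt
    (Good := fun B ↦ μ01.real B ≤ t ∧ ∃ x : Lp ℝ p μ01, IsSignOn B x ∧ ‖T x‖ ≤ t * ‖x‖)
    ⟨by simpa using ht.le, 0, isSignOn_zero, by simp⟩ hAm
    (fun S hSA hSm hS ↦ hT.exists_sign_subset (hSA.trans hA1) hSm hS ht)
    (ENNReal.ofReal_pos.2 ht)
  choose hμB x hx hTx using fun i ↦ (hB i).2.2
  obtain ⟨y, hy, hyb⟩ := exists_sign_iUnion_norm_rpow_add_sq_le hp hK0 hK T ht.le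
    (fun i ↦ (hB i).2.1) hdisj hμB hx hTx
  obtain ⟨z, hz, hzb⟩ := hy.exists_superset hp T (iUnion_subset fun i ↦ (hB i).1)
    (.iUnion fun i ↦ (hB i).2.1) hAm
  refine ⟨z, hz, hzb.trans_lt (lt_of_le_of_lt ?_ htε)⟩
  have hRt : μ01.real (A \ ⋃ i, B i) ≤ t := ENNReal.toReal_le_of_le_ofReal ht.le hR.le
  have hTy : ‖T y‖ ≤ s t ^ (1 / q) := by
    rw [one_div, Real.le_rpow_inv_iff_of_pos (norm_nonneg _) (by positivity) hq]
    nlinarith [sq_nonneg (∫ u, y u ∂μ01)]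
  have hiy : |∫ u, y u ∂μ01| ≤ √(s t) :=
    Real.abs_le_sqrt (by nlinarith [Real.rpow_nonneg (norm_nonneg (T y)) q])
  gcongr

theorem IsNarrowUpToMean.isNarrow (hp : p ≠ ∞) {T : Lp ℝ p μ01 →L[ℝ] X}
    (hT : IsNarrowUpToMean T) : IsNarrow T := by
  intro A hA1 hAm ε hε
  set q := p.toReal
  have hq : 0 < q := toReal_pos_of_fact hp
  obtain ⟨η, hη, hηε⟩ := exists_pos_lt_of_continuous
    (f := fun η ↦ η + ‖T‖ * (2 * (η / 2) ^ (1 / q)))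
    (by fun_prop (disch := positivity)) (by simp [hq.ne']) hε
  obtain ⟨x, hx, hxη⟩ := hT A hA1 hAm η hη
  obtain ⟨x', hx', hint, hdist⟩ := hx.exists_integral_eq_zero hp hAm
  refine ⟨x', hx', hint, lt_of_le_of_lt ?_ hηε⟩
  have hTx := (le_add_of_nonneg_right (abs_nonneg _)).trans hxη.le
  have hix := (le_add_of_nonneg_left (norm_nonneg _)).trans hxη.le
  calc ‖T x'‖ ≤ ‖T x‖ + ‖T (x - x')‖ := by
        simpa [map_sub] using norm_sub_le (T x) (T (x - x'))
    _ ≤ ‖T x‖ + ‖T‖ * ‖x - x'‖ := add_le_add le_rfl (T.le_opNorm _)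
    _ ≤ η + ‖T‖ * (2 * (η / 2) ^ (1 / q)) := by
        gcongr
        exact hdist.trans (by gcongr)

end Operator

theorem somewhat_narrow_is_narrow_of_type_general {X : Type*} [NormedAddCommGroup X]
    [NormedSpace ℝ X]
    (p : ℝ) [Fact (1 ≤ ENNReal.ofReal p)]
    (hX : HasTypeP p X)
    (T : Lp ℝ (ENNReal.ofReal p) μ01 →L[ℝ] X)
    (hT : IsSomewhatNarrow T) : IsNarrow T := by
  have hp : (ENNReal.ofReal p).toReal = p :=
    ENNReal.toReal_ofReal (zero_le_one.trans (ENNReal.one_le_ofReal.1 Fact.out))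
  rw [← hp] at hX
  exact (hT.isNarrowUpToMean ENNReal.ofReal_ne_top hX).isNarrow ENNReal.ofReal_ne_top

/-- If `1 ≤ p ≤ 2` and `X` is a Banach space of type `p`, then every somewhat narrow
bounded linear operator `T : L_p[0,1] → X` is narrow. -/
theorem somewhat_narrow_is_narrow_of_type {X : Type*} [NormedAddCommGroup X]
    [NormedSpace ℝ X] [CompleteSpace X]
    (p : ℝ) (hp1 : 1 ≤ p) (hp2 : p ≤ 2) [Fact (1 ≤ ENNReal.ofReal p)]
    (hX : HasTypeP p X)
    (T : Lp ℝ (ENNReal.ofReal p) μ01 →L[ℝ] X)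
    (hT : IsSomewhatNarrow T) : IsNarrow T :=
  somewhat_narrow_is_narrow_of_type_general p hX T hT
end

section
/- Assume 1 < p ≤ 2, a > 0 and b is a real number with |b| ≤ a. Then (a+b)^p − p·a^{p−1}·b ≥ a^p + (p(p−1)/2^{3−p})·b²/a^{2−p}. -/
/-!
Writing `b = a t`, homogeneity reduces the claim to `φ t ≥ 0` on `[-1, 1]` for
`φ t = (1 + t)^p - 1 - p t - c t²`, `c = p (p - 1) 2^(p-3)`. With `q = p - 1`,
`φ' t = p g t` where `g t = (1 + t)^q - 1 - q 2^(q-1) t`. Since `g` is concave, `g 0 = 0` and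
`g 1 ≥ 0` (Bernoulli's inequality for `2^(1-q)`), `g ≥ 0` on `[0, 1]`; Bernoulli's
`(1 + t)^q ≤ 1 + q t` gives `g ≤ 0` on `[-1, 0]`. So `φ` is minimal at `0`, where it vanishes.
-/

open Real Set

theorem one_add_mul_two_rpow_sub_one_le_two_rpow {q : ℝ} (hq0 : 0 ≤ q) (hq1 : q ≤ 1) :
    1 + q * 2 ^ (q - 1) ≤ (2 : ℝ) ^ q := by
  have hbern : (1 + 1 : ℝ) ^ (1 - q) ≤ 1 + (1 - q) * 1 :=
    rpow_one_add_le_one_add_mul_self (by norm_num) (by linarith) (by linarith)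
  rw [one_add_one_eq_two] at hbern
  have hpos : (0 : ℝ) < 2 ^ (q - 1) := by positivity
  have hprod : (2 : ℝ) ^ (q - 1) * 2 ^ (1 - q) = 1 := by
    rw [← rpow_add two_pos]; norm_num
  have hdouble : (2 : ℝ) ^ (q - 1) * 2 = 2 ^ q := by
    rw [← rpow_add_one two_ne_zero]; norm_num
  linarith [mul_le_mul_of_nonneg_left hbern hpos.le]

section

variable {q x : ℝ}

theorem one_add_mul_le_rpow_one_add_of_nonneg (hq0 : 0 ≤ q) (hq1 : q ≤ 1)
    (hx0 : 0 ≤ x) (hx1 : x ≤ 1) :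
    1 + q * 2 ^ (q - 1) * x ≤ (1 + x) ^ q := by
  have hchord := (concaveOn_rpow hq0 hq1).2 (mem_Ici.2 zero_le_one) (mem_Ici.2 zero_le_two)
    (sub_nonneg.2 hx1) hx0 (sub_add_cancel 1 x)
  simp only [smul_eq_mul, one_rpow] at hchord
  have hend := one_add_mul_two_rpow_sub_one_le_two_rpow hq0 hq1
  calc 1 + q * 2 ^ (q - 1) * x ≤ (1 - x) * 1 + x * 2 ^ q := by
        linarith [mul_le_mul_of_nonneg_left hend hx0]
    _ ≤ ((1 - x) * 1 + x * 2) ^ q := hchord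
    _ = (1 + x) ^ q := by ring_nf

theorem rpow_one_add_le_one_add_mul_of_nonpos (hq0 : 0 ≤ q) (hq1 : q ≤ 1)
    (hx0 : -1 ≤ x) (hx1 : x ≤ 0) :
    (1 + x) ^ q ≤ 1 + q * 2 ^ (q - 1) * x := by
  have hK : (2 : ℝ) ^ (q - 1) ≤ 1 := rpow_le_one_of_one_le_of_nonpos one_le_two (by linarith)
  have := rpow_one_add_le_one_add_mul_self hx0 hq0 hq1
  linarith [mul_nonneg (mul_nonneg hq0 (neg_nonneg.2 hx1)) (sub_nonneg.2 hK)]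

end

theorem isMinOn_of_hasDerivAt_of_nonpos_of_nonneg {f f' : ℝ → ℝ} {a b c : ℝ}
    (hf : ∀ x ∈ Icc a b, HasDerivAt f (f' x) x)
    (hleft : ∀ x ∈ Ioo a c, f' x ≤ 0) (hright : ∀ x ∈ Ioo c b, 0 ≤ f' x)
    (hc : c ∈ Icc a b) : IsMinOn f (Icc a b) c := by
  have hderiv : ∀ {u v}, Icc u v ⊆ Icc a b → ∀ x ∈ interior (Icc u v),
      HasDerivWithinAt f (f' x) (interior (Icc u v)) x := fun huv x hx =>
    (hf x (huv (interior_subset hx))).hasDerivWithinAt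
  have hcont : ContinuousOn f (Icc a b) := fun x hx => (hf x hx).continuousAt.continuousWithinAt
  intro t ht
  rcases le_total t c with htc | hct
  · have hsub : Icc a c ⊆ Icc a b := Icc_subset_Icc_right hc.2
    refine antitoneOn_of_hasDerivWithinAt_nonpos (convex_Icc a c) (hcont.mono hsub)
      (hderiv hsub) (by simpa using hleft) ⟨ht.1, htc⟩ ⟨hc.1, le_rfl⟩ htc
  · have hsub : Icc c b ⊆ Icc a b := Icc_subset_Icc_left hc.1
    refine monotoneOn_of_hasDerivWithinAt_nonneg (convex_Icc c b) (hcont.mono hsub)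
      (hderiv hsub) (by simpa using hright) ⟨le_rfl, hc.2⟩ ⟨hct, ht.2⟩ hct

theorem one_add_mul_add_sq_le_rpow_one_add {p t : ℝ} (hp1 : 1 ≤ p) (hp2 : p ≤ 2)
    (ht : t ∈ Icc (-1 : ℝ) 1) :
    1 + p * t + p * (p - 1) / 2 ^ (3 - p) * t ^ 2 ≤ (1 + t) ^ p := by
  have hq0 : 0 ≤ p - 1 := by linarith
  have hq1 : p - 1 ≤ 1 := by linarith
  have hc : 2 * (p * (p - 1) / 2 ^ (3 - p)) = p * ((p - 1) * 2 ^ (p - 1 - 1)) := by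
    rw [rpow_sub two_pos 3, rpow_sub two_pos, rpow_sub two_pos]; field_simp; ring
  set c := p * (p - 1) / 2 ^ (3 - p)
  have hf : ∀ x, HasDerivAt (fun t => (1 + t) ^ p - p * t - c * t ^ 2)
      (p * ((1 + x) ^ (p - 1) - (1 + (p - 1) * 2 ^ (p - 1 - 1) * x))) x := by
    intro x
    have h := ((((hasDerivAt_id x).const_add 1).rpow_const (Or.inr hp1)).sub
      ((hasDerivAt_id x).const_mul p)).sub ((hasDerivAt_pow 2 x).const_mul c)
    refine h.congr_deriv ?_
    simp only [id, one_mul, mul_one, Nat.cast_ofNat, Nat.add_one_sub_one, pow_one]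
    linear_combination (-x) * hc
  have hmin : 1 ≤ (1 + t) ^ p - p * t - c * t ^ 2 := by
    simpa using isMinOn_of_hasDerivAt_of_nonpos_of_nonneg (fun x _ => hf x)
      (fun x hx => mul_nonpos_of_nonneg_of_nonpos (by linarith) <| sub_nonpos.2 <|
        rpow_one_add_le_one_add_mul_of_nonpos hq0 hq1 hx.1.le hx.2.le)
      (fun x hx => mul_nonneg (by linarith) <| sub_nonneg.2 <|
        one_add_mul_le_rpow_one_add_of_nonneg hq0 hq1 hx.1.le hx.2.le)
      (show (0 : ℝ) ∈ Icc (-1) 1 by norm_num) ht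
  linarith

/-- If `1 < p ≤ 2`, `a > 0` and `|b| ≤ a`, then
`(a+b)^p - p a^{p-1} b ≥ a^p + (p(p-1)/2^{3-p}) b² / a^{2-p}`. -/
theorem pointwise_power_inequality (p a b : ℝ) (hp1 : 1 < p) (hp2 : p ≤ 2)
    (ha : 0 < a) (hb : |b| ≤ a) :
    (a + b) ^ p - p * a ^ (p - 1) * b
      ≥ a ^ p + (p * (p - 1) / 2 ^ (3 - p)) * (b ^ 2 / a ^ (2 - p)) := by
  obtain ⟨t, ht, rfl⟩ : ∃ t ∈ Icc (-1 : ℝ) 1, b = a * t := by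
    refine ⟨b / a, ?_, by field_simp⟩
    rw [mem_Icc, le_div_iff₀ ha, div_le_iff₀ ha]
    constructor <;> linarith [abs_le.1 hb]
  have hkey := one_add_mul_add_sq_le_rpow_one_add hp1.le hp2 ht
  have hsum : (a + a * t) ^ p = a ^ p * (1 + t) ^ p := by
    rw [← mul_rpow ha.le (by linarith [ht.1]), mul_one_add]
  have hlin : a ^ (p - 1) * (a * t) = a ^ p * t := by
    rw [← mul_assoc, ← rpow_add_one ha.ne', sub_add_cancel]
  have hquad : (a * t) ^ 2 / a ^ (2 - p) = a ^ p * t ^ 2 := by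
    rw [rpow_sub ha, rpow_two]; field_simp
  rw [ge_iff_le, hsum, mul_assoc, hlin, hquad]
  linarith [mul_le_mul_of_nonneg_left hkey (rpow_nonneg ha.le p)]
end

section
/- Assume 1 < p ≤ 2, A ⊆ [0,1] is measurable, a is a nonzero real number, and y is an essentially bounded measurable function on [0,1] vanishing a.e. outside A, with |y(t)| ≤ |a| for a.e. t ∈ A and ∫_{[0,1]} y dμ = 0. Then ∫_{[0,1]} |a·1_A + y|^p dμ ≥ |a|^p·μ(A) + (p(p−1)/2^{3−p})·‖y‖_2²/|a|^{2−p}, where ‖y‖_2² = ∫_{[0,1]} y² dμ. -/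
/-!
With `K = p(p-1)/2^(3-p)`, the function `h t = (1+t)^p - p t - K t²` is convex on `[-1, 1]`:
`h'' t = p(p-1)((1+t)^(p-2) - 2^(p-2)) ≥ 0` there because `1 + t ≤ 2` and `p ≤ 2`.
Since `h' 0 = 0`, `h` is minimal at `0`, i.e. `(1+t)^p ≥ 1 + p t + K t²` for `|t| ≤ 1`.
Substituting `t = u / a` gives `|a+u|^p ≥ |a|^p + c u + K u² / |a|^(2-p)` for `|u| ≤ |a|`,
with `c = p |a|^p / a`. Apply this with `u = y` on `A` and integrate: the linear term
drops out because `∫ y = 0`.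
-/

open MeasureTheory Set Filter Topology
open scoped ENNReal NNReal

lemma hasDerivAt_one_add_rpow_sub (p K : ℝ) {t : ℝ} (ht : -1 < t) :
    HasDerivAt (fun s : ℝ ↦ (1 + s) ^ p - p * s - K * s ^ 2)
      (p * (1 + t) ^ (p - 1) - p - K * (2 * t)) t := by
  have hpow := ((hasDerivAt_id t).const_add 1).rpow_const (p := p) (Or.inl (by simp; linarith))
  have := (hpow.sub ((hasDerivAt_id t).const_mul p)).sub ((hasDerivAt_pow 2 t).const_mul K)
  exact this.congr_deriv (by simp only [id]; ring_nf)

lemma convexOn_one_add_rpow_sub {p : ℝ} (hp1 : 1 ≤ p) (hp2 : p ≤ 2) :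
    ConvexOn ℝ (Icc (-1) 1)
      (fun t : ℝ ↦ (1 + t) ^ p - p * t - p * (p - 1) / 2 ^ (3 - p) * t ^ 2) := by
  set K := p * (p - 1) / 2 ^ (3 - p)
  have hK : 2 * K = p * (p - 1) * 2 ^ (p - 2) := by
    rw [show (2 : ℝ) ^ (p - 2) = 2 / 2 ^ (3 - p) by
      rw [eq_div_iff (by positivity), ← Real.rpow_add two_pos]; norm_num]
    ring
  have hderiv2 {t : ℝ} (ht : -1 < t) :
      HasDerivAt (fun s : ℝ ↦ p * (1 + s) ^ (p - 1) - p - K * (2 * s))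
        (p * ((p - 1) * (1 + t) ^ (p - 2)) - 2 * K) t := by
    have hpow := ((hasDerivAt_id t).const_add 1).rpow_const (p := p - 1)
      (Or.inl (by simp; linarith))
    have := ((hpow.const_mul p).sub_const p).sub (((hasDerivAt_id t).const_mul 2).const_mul K)
    exact this.congr_deriv (by simp only [id]; ring_nf)
  have hcont : Continuous (fun s : ℝ ↦ (1 + s) ^ p - p * s - K * s ^ 2) := by
    have := Real.continuous_rpow_const (q := p) (by linarith)
    fun_prop
  refine convexOn_of_hasDerivWithinAt2_nonneg (convex_Icc _ _) hcont.continuousOn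
    (fun t ht ↦ (hasDerivAt_one_add_rpow_sub p K (interior_Icc.subset ht).1).hasDerivWithinAt)
    (fun t ht ↦ (hderiv2 (interior_Icc.subset ht).1).hasDerivWithinAt) fun t ht ↦ ?_
  obtain ⟨ht₁, ht₂⟩ := interior_Icc.subset ht
  have hpow : (2 : ℝ) ^ (p - 2) ≤ (1 + t) ^ (p - 2) :=
    Real.rpow_le_rpow_of_nonpos (by linarith) (by linarith) (by linarith)
  have hpp : 0 ≤ p * (p - 1) := by nlinarith
  nlinarith [mul_le_mul_of_nonneg_left hpow hpp]

lemma one_add_mul_add_le_one_add_rpow {p t : ℝ} (hp1 : 1 ≤ p) (hp2 : p ≤ 2) (ht : |t| ≤ 1) :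
    1 + p * t + p * (p - 1) / 2 ^ (3 - p) * t ^ 2 ≤ (1 + t) ^ p := by
  have hderiv₀ := (hasDerivAt_one_add_rpow_sub p (p * (p - 1) / 2 ^ (3 - p))
    (by norm_num : (-1 : ℝ) < 0)).hasDerivWithinAt (s := Ioi 0)
  have hmin := (convexOn_one_add_rpow_sub hp1 hp2).isMinOn_of_rightDeriv_eq_zero
    (by simp [interior_Icc]) ((hderiv₀.derivWithin (uniqueDiffWithinAt_Ioi 0)).trans (by simp))
  have := isMinOn_iff.mp hmin t (abs_le.mp ht)
  simp only [add_zero, Real.one_rpow, mul_zero, sub_zero] at this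
  linarith

lemma le_rpow_abs_add {p a u : ℝ} (hp1 : 1 ≤ p) (hp2 : p ≤ 2) (ha : a ≠ 0) (hu : |u| ≤ |a|) :
    |a| ^ p + p * |a| ^ p / a * u + p * (p - 1) / 2 ^ (3 - p) * (u ^ 2 / |a| ^ (2 - p))
      ≤ |a + u| ^ p := by
  have haa : 0 < |a| := abs_pos.mpr ha
  have ht : |u / a| ≤ 1 := by rwa [abs_div, div_le_one haa]
  have ht₀ : 0 ≤ 1 + u / a := by linarith [(abs_le.mp ht).1]
  have hscale : |a + u| ^ p = |a| ^ p * (1 + u / a) ^ p := by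
    rw [← Real.mul_rpow haa.le ht₀, ← abs_of_nonneg ht₀, ← abs_mul, mul_add, mul_one,
      mul_div_cancel₀ _ ha]
  have hsq : |a| ^ (2 - p) = a ^ 2 / |a| ^ p := by
    rw [Real.rpow_sub haa, ← sq_abs a, ← Real.rpow_natCast]
    norm_num
  rw [hscale, hsq]
  calc _ = |a| ^ p * (1 + p * (u / a) + p * (p - 1) / 2 ^ (3 - p) * (u / a) ^ 2) := by
          field_simp
    _ ≤ _ := mul_le_mul_of_nonneg_left (one_add_mul_add_le_one_add_rpow hp1 hp2 ht) (by positivity)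

lemma integrable_rpow_abs_of_ae_abs_le {α : Type*} [MeasurableSpace α] {μ : Measure α}
    [IsFiniteMeasure μ] {f : α → ℝ} {p C : ℝ} (hp : 0 ≤ p) (hf : AEStronglyMeasurable f μ)
    (hfC : ∀ᵐ t ∂μ, |f t| ≤ C) :
    Integrable (fun t ↦ |f t| ^ p) μ := by
  refine .of_bound (((Real.continuous_rpow_const hp).comp continuous_abs)
    |>.comp_aestronglyMeasurable hf) (C ^ p) ?_
  filter_upwards [hfC] with t ht
  rw [Real.norm_eq_abs, abs_of_nonneg (by positivity)]
  exact Real.rpow_le_rpow (abs_nonneg _) ht hp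

theorem le_integral_rpow_abs_indicator_add {α : Type*} [MeasurableSpace α] {μ : Measure α}
    [IsFiniteMeasure μ] {p : ℝ} (hp1 : 1 ≤ p) (hp2 : p ≤ 2) {A : Set α} (hA : MeasurableSet A)
    {a : ℝ} (ha : a ≠ 0) {y : α → ℝ} (hy : AEStronglyMeasurable y μ)
    (hy0 : ∀ᵐ t ∂μ, t ∉ A → y t = 0) (hyb : ∀ᵐ t ∂μ, t ∈ A → |y t| ≤ |a|)
    (hymean : ∫ t, y t ∂μ = 0) :
    |a| ^ p * μ.real A + p * (p - 1) / 2 ^ (3 - p) * ((∫ t, y t ^ 2 ∂μ) / |a| ^ (2 - p))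
      ≤ ∫ t, |a * A.indicator (fun _ ↦ (1 : ℝ)) t + y t| ^ p ∂μ := by
  set K := p * (p - 1) / 2 ^ (3 - p)
  set c := p * |a| ^ p / a
  have hyle : ∀ᵐ t ∂μ, |y t| ≤ |a| := by
    filter_upwards [hy0, hyb] with t h0 h1
    by_cases htA : t ∈ A
    · exact h1 htA
    · simp [h0 htA]
  have hpointwise : ∀ᵐ t ∂μ,
      A.indicator (fun _ ↦ |a| ^ p) t + c * y t + K / |a| ^ (2 - p) * y t ^ 2
        ≤ |a * A.indicator (fun _ ↦ (1 : ℝ)) t + y t| ^ p := by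
    filter_upwards [hy0, hyb] with t h0 h1
    by_cases htA : t ∈ A
    · rw [indicator_of_mem htA, indicator_of_mem htA, mul_one]
      exact (le_rpow_abs_add hp1 hp2 ha (h1 htA)).trans_eq' (by ring)
    · simp [htA, h0 htA, Real.zero_rpow (by linarith : p ≠ 0)]
  have hIndInt : Integrable (A.indicator fun _ ↦ |a| ^ p) μ := (integrable_const _).indicator hA
  have hyInt : Integrable y μ := .of_bound hy |a| hyle
  have hy2Int : Integrable (fun t ↦ y t ^ 2) μ := .of_bound (hy.pow 2) (|a| ^ 2) <| by
    filter_upwards [hyle] with t ht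
    simpa using pow_le_pow_left₀ (abs_nonneg _) ht 2
  have hfInt : Integrable (fun t ↦ |a * A.indicator (fun _ ↦ (1 : ℝ)) t + y t| ^ p) μ := by
    refine integrable_rpow_abs_of_ae_abs_le (by linarith)
      (((aestronglyMeasurable_const.indicator hA).const_mul a).add hy) (C := 2 * |a|) ?_
    filter_upwards [hyle] with t ht
    have hind : |a * A.indicator (fun _ ↦ (1 : ℝ)) t| ≤ |a| := by
      by_cases htA : t ∈ A <;> simp [htA]
    exact (abs_add_le _ _).trans (by linarith)
  calc |a| ^ p * μ.real A + K * ((∫ t, y t ^ 2 ∂μ) / |a| ^ (2 - p))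
      = ∫ t, A.indicator (fun _ ↦ |a| ^ p) t + c * y t + K / |a| ^ (2 - p) * y t ^ 2 ∂μ := by
        rw [integral_add (f := fun t ↦ A.indicator (fun _ ↦ |a| ^ p) t + c * y t)
          (hIndInt.add (hyInt.const_mul c)) (hy2Int.const_mul _),
          integral_add hIndInt (hyInt.const_mul c), integral_const_mul, integral_const_mul,
          hymean, integral_indicator_const _ hA, smul_eq_mul]
        ring
    _ ≤ _ := integral_mono_ae ((hIndInt.add (hyInt.const_mul c)).add (hy2Int.const_mul _))
        hfInt hpointwise

theorem integral_power_inequality_general (p : ℝ) (hp1 : 1 < p) (hp2 : p ≤ 2)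
    (A : Set ℝ) (hAm : MeasurableSet A)
    (a : ℝ) (ha : a ≠ 0)
    (y : ℝ → ℝ) (hy : Measurable y)
    (hy0 : ∀ᵐ t ∂μ01, t ∉ A → y t = 0)
    (hyb : ∀ᵐ t ∂μ01, t ∈ A → |y t| ≤ |a|)
    (hymean : ∫ t, y t ∂μ01 = 0) :
    ∫ t, |a * Set.indicator A (fun _ => (1:ℝ)) t + y t| ^ p ∂μ01
      ≥ |a| ^ p * (μ01 A).toReal
        + (p * (p - 1) / 2 ^ (3 - p)) * ((∫ t, (y t) ^ 2 ∂μ01) / |a| ^ (2 - p)) := by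
  have : IsFiniteMeasure μ01 := by
    unfold μ01
    infer_instance
  exact le_integral_rpow_abs_indicator_add hp1.le hp2 hAm ha hy.aestronglyMeasurable hy0 hyb hymean

/-- If `1 < p ≤ 2`, `A ⊆ [0,1]` is measurable, `a ≠ 0`, and `y` is a measurable function
vanishing a.e. outside `A` with `|y| ≤ |a|` a.e. on `A` and `∫ y dμ = 0`, then
`∫ |a·1_A + y|^p dμ ≥ |a|^p μ(A) + (p(p-1)/2^{3-p}) ‖y‖₂² / |a|^{2-p}`. -/
theorem integral_power_inequality (p : ℝ) (hp1 : 1 < p) (hp2 : p ≤ 2)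
    (A : Set ℝ) (hA : A ⊆ Set.Icc 0 1) (hAm : MeasurableSet A)
    (a : ℝ) (ha : a ≠ 0)
    (y : ℝ → ℝ) (hy : Measurable y)
    (hy0 : ∀ᵐ t ∂μ01, t ∉ A → y t = 0)
    (hyb : ∀ᵐ t ∂μ01, t ∈ A → |y t| ≤ |a|)
    (hymean : ∫ t, y t ∂μ01 = 0) :
    ∫ t, |a * Set.indicator A (fun _ => (1:ℝ)) t + y t| ^ p ∂μ01
      ≥ |a| ^ p * (μ01 A).toReal
        + (p * (p - 1) / 2 ^ (3 - p)) * ((∫ t, (y t) ^ 2 ∂μ01) / |a| ^ (2 - p)) :=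
  integral_power_inequality_general p hp1 hp2 A hAm a ha y hy hy0 hyb hymean
end
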